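/- U is m-recurrent if and only if its weak dual resolvent U* is m-recurrent. -/

import Mathlib

open MeasureTheory ENNReal Filter Set

/-- A sub-Markovian resolvent of kernels on a measurable space `E`. -/
structure SubMarkovResolvent (E : Type*) [MeasurableSpace E] where
  /-- the kernel `U_α` for each `α > 0` -/
  kernel : ℝ → E → MeasureTheory.Measure E
  measurable_op : ∀ α : ℝ, 0 < α → ∀ f : E → ℝ≥0∞, Measurable f →
    Measurable (fun x => ∫⁻ y, f y ∂(kernel α x))
  resolvent_eq : ∀ α β : ℝ, 0 < α → α ≤ β → ∀ f : E → ℝ≥0∞, Measurable f → ∀ x,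
    ∫⁻ y, f y ∂(kernel α x)
      = (∫⁻ y, f y ∂(kernel β x))
        + ENNReal.ofReal (β - α) * ∫⁻ y, (∫⁻ z, f z ∂(kernel β y)) ∂(kernel α x)
  subMarkov : ∀ α : ℝ, 0 < α → ∀ x, ENNReal.ofReal α * kernel α x Set.univ ≤ 1

namespace SubMarkovResolvent

variable {E : Type*} [MeasurableSpace E]

/-- The action of `U_α` on positive measurable functions. -/
noncomputable def op (R : SubMarkovResolvent E) (α : ℝ) (f : E → ℝ≥0∞) (x : E) : ℝ≥0∞ :=
  ∫⁻ y, f y ∂(R.kernel α x)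

/-- The action of `U_α` on real-valued functions. -/
noncomputable def opR (R : SubMarkovResolvent E) (α : ℝ) (f : E → ℝ) (x : E) : ℝ :=
  ∫ y, f y ∂(R.kernel α x)

/-- The initial (potential) kernel `U = sup_{α > 0} U_α`. -/
noncomputable def pot (R : SubMarkovResolvent E) (f : E → ℝ≥0∞) (x : E) : ℝ≥0∞ :=
  ⨆ (α : ℝ) (_ : 0 < α), R.op α f x

/-- `m` is sub-invariant: `m ∘ (α U_α) ≤ m` for all `α > 0`. -/
def SubInvariant (R : SubMarkovResolvent E) (m : Measure E) : Prop :=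
  ∀ α : ℝ, 0 < α → ∀ f : E → ℝ≥0∞, Measurable f →
    ENNReal.ofReal α * ∫⁻ x, R.op α f x ∂m ≤ ∫⁻ x, f x ∂m

/-- `U` is `m`-transient. -/
def Transient (R : SubMarkovResolvent E) (m : Measure E) : Prop :=
  ∃ f : E → ℝ≥0∞, Measurable f ∧ (∫⁻ x, f x ∂m < ⊤) ∧
    (∀ᵐ x ∂m, 0 < f x) ∧ (∀ᵐ x ∂m, R.pot f x < ⊤)

/-- `U` is `m`-recurrent. -/
def Recurrent (R : SubMarkovResolvent E) (m : Measure E) : Prop :=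
  ∀ f : E → ℝ≥0∞, Measurable f → (∫⁻ x, f x ∂m < ⊤) →
    m {x | 0 < R.pot f x ∧ R.pot f x < ⊤} = 0

/-- `A` is `U`-absorbing with respect to `m`. -/
def Absorbing (R : SubMarkovResolvent E) (m : Measure E) (A : Set E) : Prop :=
  MeasurableSet A ∧ ∀ᵐ x ∂m, x ∈ A → R.pot (Set.indicator Aᶜ 1) x = 0

/-- `U` is `m`-irreducible. -/
def Irreducible (R : SubMarkovResolvent E) (m : Measure E) : Prop :=
  ∀ A : Set E, R.Absorbing m A → m A = 0 ∨ m Aᶜ = 0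

/-- `u` is `U`-excessive: supermedian and `α U_α u ↑ u` as `α → ∞`. -/
def Excessive (R : SubMarkovResolvent E) (u : E → ℝ≥0∞) : Prop :=
  Measurable u ∧ (∀ α : ℝ, 0 < α → ∀ x, ENNReal.ofReal α * R.op α u x ≤ u x) ∧
    (∀ x, (⨆ (α : ℝ) (_ : 0 < α), ENNReal.ofReal α * R.op α u x) = u x)

/-- The complete maximum principle for the initial kernel of `U`. -/
def CompleteMaxPrinciple (R : SubMarkovResolvent E) : Prop :=
  ∀ (f g : E → ℝ≥0∞) (c : ℝ≥0∞), Measurable f → Measurable g →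
    (∀ x, 0 < f x → R.pot f x ≤ R.pot g x + c) → ∀ x, R.pot f x ≤ R.pot g x + c

/-- `U` and `U*` are in weak duality with respect to `m`. -/
def InDuality (R S : SubMarkovResolvent E) (m : Measure E) : Prop :=
  ∀ α : ℝ, 0 < α → ∀ f g : E → ℝ≥0∞, Measurable f → Measurable g →
    ∫⁻ x, f x * R.op α g x ∂m = ∫⁻ x, g x * S.op α f x ∂m

/-- A real-valued function `v` is `U`-invariant with respect to `m`:
`U_α(v f) = v ⋅ U_α f` `m`-a.e. for all `α > 0` and bounded positive measurable `f`. -/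
def Invariant (R : SubMarkovResolvent E) (m : Measure E) (v : E → ℝ) : Prop :=
  ∀ α : ℝ, 0 < α → ∀ f : E → ℝ, Measurable f → (∀ x, 0 ≤ f x) → (∃ C : ℝ, ∀ x, f x ≤ C) →
    ∀ᵐ x ∂m, R.opR α (fun y => v y * f y) x = v x * R.opR α f x

end SubMarkovResolvent

/-!
Weak duality passes to the initial kernels: `∫ f · U g dm = ∫ g · U* f dm`. Recurrence of `U` says
that `U f ∈ {0, ∞}` a.e. for integrable `f`, so `∫ g · U f dm` is `0` as soon as it is finite.
Taking for `f` the indicator of a set of finite measure on which `U* g ≤ n`, the left side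
`∫ f · U* g dm` is finite, hence zero; so `U* g = 0` a.e. where it is finite, by σ-finiteness.
-/

theorem MeasureTheory.lintegral_eq_zero_of_ae_eq_zero_or_top {α : Type*} [MeasurableSpace α]
    {μ : Measure α} {h : α → ℝ≥0∞} (hh : Measurable h) (h0top : ∀ᵐ x ∂μ, h x = 0 ∨ h x = ⊤)
    (hfin : ∫⁻ x, h x ∂μ ≠ ⊤) : ∫⁻ x, h x ∂μ = 0 := by
  rw [lintegral_eq_zero_iff hh]
  filter_upwards [h0top, ae_lt_top hh hfin] with x hx hlt
  exact hx.resolve_right hlt.ne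

namespace SubMarkovResolvent

variable {E : Type*} [MeasurableSpace E] {m : Measure E}

theorem op_le_op_of_le (R : SubMarkovResolvent E) {α β : ℝ} (hα : 0 < α) (hαβ : α ≤ β)
    {f : E → ℝ≥0∞} (hf : Measurable f) (x : E) : R.op β f x ≤ R.op α f x := by
  rw [op, op, R.resolvent_eq α β hα hαβ f hf x]
  exact le_self_add

theorem monotone_op_one_div (R : SubMarkovResolvent E) {f : E → ℝ≥0∞} (hf : Measurable f) :
    Monotone fun (n : ℕ) => R.op (1 / (n + 1)) f := fun n k hnk x =>
  R.op_le_op_of_le (by positivity) (Nat.one_div_le_one_div hnk) hf x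

theorem pot_eq_iSup_nat (R : SubMarkovResolvent E) {f : E → ℝ≥0∞} (hf : Measurable f) (x : E) :
    R.pot f x = ⨆ n : ℕ, R.op (1 / (n + 1)) f x := by
  apply le_antisymm
  · refine iSup₂_le fun α hα => ?_
    obtain ⟨n, hn⟩ := exists_nat_one_div_lt hα
    exact (R.op_le_op_of_le (by positivity) hn.le hf x).trans (le_iSup_of_le n le_rfl)
  · exact iSup_le fun n => le_iSup₂_of_le (f := fun α (_ : 0 < α) => R.op α f x)
      (1 / (n + 1) : ℝ) (by positivity) le_rfl

theorem measurable_pot (R : SubMarkovResolvent E) {f : E → ℝ≥0∞} (hf : Measurable f) :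
    Measurable (R.pot f) := by
  rw [funext (R.pot_eq_iSup_nat hf)]
  exact .iSup fun n => R.measurable_op _ (by positivity) f hf

theorem lintegral_mul_pot_eq_iSup (R : SubMarkovResolvent E) {f g : E → ℝ≥0∞}
    (hf : Measurable f) (hg : Measurable g) :
    ∫⁻ x, f x * R.pot g x ∂m = ⨆ n : ℕ, ∫⁻ x, f x * R.op (1 / (n + 1)) g x ∂m := by
  simp_rw [R.pot_eq_iSup_nat hg, ENNReal.mul_iSup]
  exact lintegral_iSup (fun n => hf.mul (R.measurable_op _ (by positivity) g hg))
    fun n k hnk x => by gcongr; exact R.monotone_op_one_div hg hnk x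

theorem InDuality.symm {R S : SubMarkovResolvent E} (hD : R.InDuality S m) : S.InDuality R m :=
  fun α hα f g hf hg => (hD α hα g f hg hf).symm

theorem InDuality.lintegral_mul_pot {R S : SubMarkovResolvent E} (hD : R.InDuality S m)
    {f g : E → ℝ≥0∞} (hf : Measurable f) (hg : Measurable g) :
    ∫⁻ x, f x * R.pot g x ∂m = ∫⁻ x, g x * S.pot f x ∂m := by
  rw [R.lintegral_mul_pot_eq_iSup hf hg, S.lintegral_mul_pot_eq_iSup hg hf]
  exact iSup_congr fun n => hD _ (by positivity) f g hf hg

theorem Recurrent.ae_pot_eq_zero_or_top {R : SubMarkovResolvent E} (hR : R.Recurrent m)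
    {f : E → ℝ≥0∞} (hf : Measurable f) (hfint : ∫⁻ x, f x ∂m < ⊤) :
    ∀ᵐ x ∂m, R.pot f x = 0 ∨ R.pot f x = ⊤ := by
  rw [ae_iff]
  refine measure_mono_null (fun x hx => ?_) (hR f hf hfint)
  obtain ⟨hne0, hnetop⟩ := not_or.1 hx
  exact ⟨pos_iff_ne_zero.2 hne0, lt_top_iff_ne_top.2 hnetop⟩

theorem Recurrent.lintegral_mul_pot_eq_zero {R : SubMarkovResolvent E} (hR : R.Recurrent m)
    {f g : E → ℝ≥0∞} (hf : Measurable f) (hfint : ∫⁻ x, f x ∂m < ⊤) (hg : Measurable g)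
    (hfin : ∫⁻ x, g x * R.pot f x ∂m ≠ ⊤) : ∫⁻ x, g x * R.pot f x ∂m = 0 := by
  refine lintegral_eq_zero_of_ae_eq_zero_or_top (hg.mul (R.measurable_pot hf)) ?_ hfin
  filter_upwards [hR.ae_pot_eq_zero_or_top hf hfint] with x hx
  rcases hx with hx | hx
  · simp [hx]
  · by_cases hgx : g x = 0 <;> simp [hx, hgx]

theorem Recurrent.ae_dual_pot_eq_zero_of_le {R S : SubMarkovResolvent E} (hR : R.Recurrent m)
    (hD : R.InDuality S m) {g : E → ℝ≥0∞} (hg : Measurable g) {s : Set E} (hs : MeasurableSet s)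
    (hms : m s < ⊤) (n : ℕ) : ∀ᵐ x ∂m, x ∈ s ∩ {x | S.pot g x ≤ n} → S.pot g x = 0 := by
  have hφ := S.measurable_pot hg
  set C := s ∩ {x | S.pot g x ≤ n}
  have hC : MeasurableSet C := hs.inter (hφ measurableSet_Iic)
  have hf : Measurable (C.indicator (1 : E → ℝ≥0∞)) := measurable_one.indicator hC
  have hmC : m C < ⊤ := (measure_mono inter_subset_left).trans_lt hms
  have hfint : ∫⁻ x, C.indicator 1 x ∂m < ⊤ := by rwa [lintegral_indicator_one hC]
  have hdual : ∫⁻ x in C, S.pot g x ∂m = ∫⁻ x, g x * R.pot (C.indicator 1) x ∂m := by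
    rw [← hD.symm.lintegral_mul_pot hf hg, ← lintegral_indicator hC]
    congr 1 with x
    by_cases hx : x ∈ C <;> simp [hx]
  have hbound : ∫⁻ x in C, S.pot g x ∂m ≠ ⊤ := by
    refine ne_top_of_le_ne_top ?_ (setLIntegral_mono measurable_const fun x hx => hx.2)
    rw [setLIntegral_const]
    exact mul_ne_top (natCast_ne_top n) hmC.ne
  rw [← setLIntegral_eq_zero_iff hC hφ, hdual]
  exact hR.lintegral_mul_pot_eq_zero hf hfint hg (hdual ▸ hbound)

theorem Recurrent.dual [SigmaFinite m] {R S : SubMarkovResolvent E} (hR : R.Recurrent m)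
    (hD : R.InDuality S m) : S.Recurrent m := by
  intro g hg _
  have hae : ∀ᵐ x ∂m, S.pot g x < ⊤ → S.pot g x = 0 := by
    refine ae_of_forall_measure_lt_top_ae_restrict _ fun s hs hms => ?_
    rw [ae_restrict_iff' hs]
    filter_upwards [ae_all_iff.2 (hR.ae_dual_pot_eq_zero_of_le hD hg hs hms)] with x hx hxs hlt
    obtain ⟨n, hn⟩ := ENNReal.exists_nat_gt hlt.ne
    exact hx n ⟨hxs, hn.le⟩
  refine measure_mono_null (fun x hx => ?_) (ae_iff.1 hae)
  exact fun h => hx.1.ne' (h hx.2)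

end SubMarkovResolvent

theorem recurrent_iff_dual_recurrent_general {E : Type*} [MeasurableSpace E]
    (R S : SubMarkovResolvent E) (m : MeasureTheory.Measure E) [MeasureTheory.SigmaFinite m]
    (hD : R.InDuality S m) :
    R.Recurrent m ↔ S.Recurrent m :=
  ⟨fun hR => hR.dual hD, fun hS => hS.dual hD.symm⟩

/-- `U` is `m`-recurrent iff its weak dual `U*` is `m`-recurrent. -/
theorem recurrent_iff_dual_recurrent {E : Type*} [MeasurableSpace E]
    (R S : SubMarkovResolvent E) (m : MeasureTheory.Measure E) [MeasureTheory.SigmaFinite m]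
    (hm : R.SubInvariant m) (hD : R.InDuality S m) :
    R.Recurrent m ↔ S.Recurrent m :=
  recurrent_iff_dual_recurrent_general R S m hD
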